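/- Let φ_0 = ψ_0 = (x_0) be 1×1 matrices over the polynomial ring k[x_0,...,x_{2m+2}], and inductively define the 2^{m+1}×2^{m+1} matrices φ_{m+1} = [[φ_m, x_{2m+1}·I], [x_{2m+2}·I, -ψ_m]] and ψ_{m+1} = [[ψ_m, x_{2m+1}·I], [x_{2m+2}·I, -φ_m]]. Then φ_m · ψ_m = (x_0^2 + x_1 x_2 + ... + x_{2m-1} x_{2m}) · I, i.e., the pair (φ_m, ψ_m) is a matrix factorization of the quadratic form x_0^2 + x_1 x_2 + ... + x_{2m-1} x_{2m}. -/

import Mathlib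

open MvPolynomial Matrix

/-- Index type of size `2^m`. -/
def SpinIdx : ℕ → Type
  | 0 => Unit
  | m + 1 => SpinIdx m ⊕ SpinIdx m

instance spinIdxFintype : (m : ℕ) → Fintype (SpinIdx m)
  | 0 => inferInstanceAs (Fintype Unit)
  | m + 1 => letI := spinIdxFintype m; inferInstanceAs (Fintype (SpinIdx m ⊕ SpinIdx m))

instance spinIdxDecEq : (m : ℕ) → DecidableEq (SpinIdx m)
  | 0 => inferInstanceAs (DecidableEq Unit)
  | m + 1 => letI := spinIdxDecEq m; inferInstanceAs (DecidableEq (SpinIdx m ⊕ SpinIdx m))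

-- The matrices `φ_m` and `ψ_m` over `k[x_0, x_1, x_2, …]`:
-- `φ_0 = ψ_0 = (x_0)`,
-- `φ_{m+1} = [[φ_m, x_{2m+1}·I], [x_{2m+2}·I, -ψ_m]]`, and
-- `ψ_{m+1} = [[ψ_m, x_{2m+1}·I], [x_{2m+2}·I, -φ_m]]`.
mutual
  noncomputable def phiMat (k : Type*) [CommRing k] :
      (m : ℕ) → Matrix (SpinIdx m) (SpinIdx m) (MvPolynomial ℕ k)
    | 0 => fun _ _ => X 0
    | m + 1 =>
        Matrix.fromBlocks (phiMat k m)
          ((X (2 * m + 1) : MvPolynomial ℕ k) • (1 : Matrix (SpinIdx m) (SpinIdx m) (MvPolynomial ℕ k)))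
          ((X (2 * m + 2) : MvPolynomial ℕ k) • (1 : Matrix (SpinIdx m) (SpinIdx m) (MvPolynomial ℕ k)))
          (-(psiMat k m))
  noncomputable def psiMat (k : Type*) [CommRing k] :
      (m : ℕ) → Matrix (SpinIdx m) (SpinIdx m) (MvPolynomial ℕ k)
    | 0 => fun _ _ => X 0
    | m + 1 =>
        Matrix.fromBlocks (psiMat k m)
          ((X (2 * m + 1) : MvPolynomial ℕ k) • (1 : Matrix (SpinIdx m) (SpinIdx m) (MvPolynomial ℕ k)))
          ((X (2 * m + 2) : MvPolynomial ℕ k) • (1 : Matrix (SpinIdx m) (SpinIdx m) (MvPolynomial ℕ k)))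
          (-(phiMat k m))
end

/-! If `A * B = B * A = q • 1`, then, because scalar blocks commute with everything,
`[[A, a • 1], [b • 1, -B]]` and `[[B, a • 1], [b • 1, -A]]` multiply in either order to
`(q + a * b) • 1`. Applying this with `(A, B) = (φ_m, ψ_m)` and with `(A, B) = (ψ_m, φ_m)` gives
both `φ_{m+1} ψ_{m+1}` and `ψ_{m+1} φ_{m+1}`, so the two products are proved together by induction
on `m`. -/

theorem Matrix.fromBlocks_smul_one_mul_fromBlocks_smul_one {n R : Type*} [Fintype n] [DecidableEq n]
    [CommRing R] {A B : Matrix n n R} {q : R} (a b : R) (hAB : A * B = q • 1) (hBA : B * A = q • 1) :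
    fromBlocks A (a • 1) (b • 1) (-B) * fromBlocks B (a • 1) (b • 1) (-A) =
      (q + a * b) • (1 : Matrix (n ⊕ n) (n ⊕ n) R) := by
  rw [fromBlocks_multiply, ← fromBlocks_one, fromBlocks_smul, neg_mul_neg, hAB, hBA]
  simp only [Matrix.smul_mul, Matrix.mul_smul, Matrix.mul_one, Matrix.one_mul, mul_neg, neg_mul,
    smul_smul, smul_zero, add_smul]
  rw [add_neg_cancel, add_neg_cancel, mul_comm b a, add_comm ((a * b) • 1)]

section

variable (k : Type*) [CommRing k]

noncomputable def quadForm (m : ℕ) : MvPolynomial ℕ k :=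
  X 0 ^ 2 + ∑ i ∈ Finset.range m, X (2 * i + 1) * X (2 * i + 2)

theorem quadForm_succ (m : ℕ) :
    quadForm k (m + 1) = quadForm k m + X (2 * m + 1) * X (2 * m + 2) := by
  rw [quadForm, quadForm, Finset.sum_range_succ, add_assoc]

theorem phiMat_zero : phiMat k 0 = (X 0 : MvPolynomial ℕ k) • 1 := by
  funext (i : Unit) (j : Unit)
  obtain rfl : i = j := Subsingleton.elim i j
  exact (mul_one _).symm

theorem psiMat_zero : psiMat k 0 = (X 0 : MvPolynomial ℕ k) • 1 := by
  funext (i : Unit) (j : Unit)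
  obtain rfl : i = j := Subsingleton.elim i j
  exact (mul_one _).symm

theorem phiMat_mul_psiMat_and_psiMat_mul_phiMat (m : ℕ) :
    phiMat k m * psiMat k m = quadForm k m • 1 ∧ psiMat k m * phiMat k m = quadForm k m • 1 := by
  induction m with
  | zero =>
    simp only [phiMat_zero, psiMat_zero, smul_mul_smul, Matrix.one_mul, quadForm, sq,
      Finset.sum_range_zero, add_zero, and_self]
  | succ m ih =>
    rw [phiMat, psiMat, quadForm_succ]
    exact ⟨fromBlocks_smul_one_mul_fromBlocks_smul_one _ _ ih.1 ih.2,
      fromBlocks_smul_one_mul_fromBlocks_smul_one _ _ ih.2 ih.1⟩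

end

/-- `(φ_m, ψ_m)` is a matrix factorization of `x_0^2 + x_1 x_2 + ⋯ + x_{2m-1} x_{2m}`. -/
theorem phiMat_mul_psiMat (k : Type*) [CommRing k] (m : ℕ) :
    phiMat k m * psiMat k m =
      ((X 0 ^ 2 + ∑ i ∈ Finset.range m, X (2 * i + 1) * X (2 * i + 2) : MvPolynomial ℕ k)) •
        (1 : Matrix (SpinIdx m) (SpinIdx m) (MvPolynomial ℕ k)) :=
  (phiMat_mul_psiMat_and_psiMat_mul_phiMat k m).1
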